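/- arXiv:0912.1296 — 3 statements merged into one kernel-verified Lean document; each statement's English description precedes it below -/
import Mathlib

section
/- Let R be a unique factorization domain and let a, b, c ∈ R with a ≠ 0 and such that every common divisor of a, b, and c is a unit. Then the polynomial a·x² + b·x + c ∈ R[x] factors into two linear factors (i.e., there exist A, B, C, D ∈ R with a·x² + b·x + c = (A·x + B)·(C·x + D) as polynomials) if and only if there exist b₁, b₂ ∈ R such that b₁·b₂ = a·c and b₁ + b₂ = b. -/
/-!
Expanding `(A x + B)(C x + D)` shows that `b₁ = A D`, `b₂ = B C` split the middle coefficient.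
Conversely, the four-number lemma refines `b₁ b₂ = a c` to `a = g a₂`, `b₁ = g u`, `b₂ = a₂ v`,
`c = u v`, and then `a x² + b x + c = (g x + v)(a₂ x + u)`.
-/

open Polynomial

/-- The four-number lemma (Vierzahlensatz). -/
theorem exists_factors_of_mul_eq_mul {α : Type*} [CommMonoidWithZero α] [IsLeftCancelMulZero α]
    [DecompositionMonoid α] {a b₁ b₂ c : α} (ha : a ≠ 0) (h : b₁ * b₂ = a * c) :
    ∃ g u a₂ v : α, a = g * a₂ ∧ b₁ = g * u ∧ b₂ = a₂ * v ∧ c = u * v := by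
  obtain ⟨g, a₂, ⟨u, rfl⟩, ⟨v, rfl⟩, rfl⟩ := exists_dvd_and_dvd_of_dvd_mul (Dvd.intro c h.symm)
  exact ⟨g, u, a₂, v, rfl, rfl, rfl,
    mul_left_cancel₀ ha (h.symm.trans (mul_mul_mul_comm g u a₂ v))⟩

namespace Polynomial

variable {R : Type*}

theorem linear_mul_linear [CommSemiring R] (A B C' D : R) :
    (C A * X + C B) * (C C' * X + C D) =
      C (A * C') * X ^ 2 + C (A * D + B * C') * X + C (B * D) := by
  simp only [map_add, map_mul]
  ring

theorem quadratic_inj [Semiring R] {a b c a' b' c' : R}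
    (h : C a * X ^ 2 + C b * X + C c = C a' * X ^ 2 + C b' * X + C c') :
    a = a' ∧ b = b' ∧ c = c' := by
  refine ⟨?_, ?_, ?_⟩
  · simpa using congrArg (coeff · 2) h
  · simpa using congrArg (coeff · 1) h
  · simpa using congrArg (coeff · 0) h

end Polynomial

theorem quadratic_factors_iff_split_middle_general
    {R : Type*} [CommRing R] [IsDomain R] [UniqueFactorizationMonoid R]
    (a b c : R) (ha : a ≠ 0) :
    (∃ A B C D : R,
      Polynomial.C a * Polynomial.X ^ 2 + Polynomial.C b * Polynomial.X + Polynomial.C c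
        = (Polynomial.C A * Polynomial.X + Polynomial.C B) *
          (Polynomial.C C * Polynomial.X + Polynomial.C D)) ↔
    (∃ b₁ b₂ : R, b₁ * b₂ = a * c ∧ b₁ + b₂ = b) := by
  constructor
  · rintro ⟨A, B, C', D, h⟩
    obtain ⟨rfl, rfl, rfl⟩ := quadratic_inj (h.trans (linear_mul_linear A B C' D))
    exact ⟨A * D, B * C', by ring, rfl⟩
  · rintro ⟨b₁, b₂, h, rfl⟩
    obtain ⟨g, u, a₂, v, rfl, rfl, rfl, rfl⟩ := exists_factors_of_mul_eq_mul ha h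
    refine ⟨g, v, a₂, u, ?_⟩
    rw [linear_mul_linear, mul_comm v a₂, mul_comm v u]

theorem quadratic_factors_iff_split_middle
    {R : Type*} [CommRing R] [IsDomain R] [UniqueFactorizationMonoid R]
    (a b c : R) (ha : a ≠ 0)
    (hcop : ∀ d : R, d ∣ a → d ∣ b → d ∣ c → IsUnit d) :
    (∃ A B C D : R,
      Polynomial.C a * Polynomial.X ^ 2 + Polynomial.C b * Polynomial.X + Polynomial.C c
        = (Polynomial.C A * Polynomial.X + Polynomial.C B) *
          (Polynomial.C C * Polynomial.X + Polynomial.C D)) ↔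
    (∃ b₁ b₂ : R, b₁ * b₂ = a * c ∧ b₁ + b₂ = b) :=
  quadratic_factors_iff_split_middle_general a b c ha
end

section
/- Let R be a unique factorization domain and let a, b, c ∈ R with a ≠ 0 and such that every common divisor of a, b, and c is a unit. Suppose b₁, b₂ ∈ R satisfy b₁·b₂ = a·c and b₁ + b₂ = b. Then there exist A, B, C, D ∈ R such that A·C = a, A·D = b₁, B·C = b₂, and B·D = c. -/
/-! Since `a ∣ b₁ * b₂` and every element of a UFD is primal, `a = A * C` with `A ∣ b₁` and
`C ∣ b₂`; writing `b₁ = A * D` and `b₂ = C * B`, the relation `b₁ * b₂ = a * c` becomes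
`a * (B * D) = a * c`, and cancelling `a ≠ 0` gives `B * D = c`. -/

theorem exists_mul_eq_of_mul_eq_mul {α : Type*} [CommMonoidWithZero α] [IsCancelMulZero α]
    [DecompositionMonoid α] {a b₁ b₂ c : α} (ha : a ≠ 0) (h : b₁ * b₂ = a * c) :
    ∃ A B C D : α, A * C = a ∧ A * D = b₁ ∧ B * C = b₂ ∧ B * D = c := by
  obtain ⟨A, C, ⟨D, rfl⟩, ⟨B, rfl⟩, rfl⟩ := exists_dvd_and_dvd_of_dvd_mul (Dvd.intro c h.symm)
  refine ⟨A, B, C, D, rfl, rfl, mul_comm B C, mul_left_cancel₀ ha ?_⟩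
  rw [← h]
  ac_rfl

theorem exists_ABCD_of_split_middle_general
    {R : Type*} [CommRing R] [UniqueFactorizationMonoid R]
    (a c : R) (ha : a ≠ 0)
    (b₁ b₂ : R) (hmul : b₁ * b₂ = a * c) :
    ∃ A B C D : R, A * C = a ∧ A * D = b₁ ∧ B * C = b₂ ∧ B * D = c :=
  exists_mul_eq_of_mul_eq_mul ha hmul

theorem exists_ABCD_of_split_middle
    {R : Type*} [CommRing R] [IsDomain R] [UniqueFactorizationMonoid R]
    (a b c : R) (ha : a ≠ 0)
    (hcop : ∀ d : R, d ∣ a → d ∣ b → d ∣ c → IsUnit d)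
    (b₁ b₂ : R) (hmul : b₁ * b₂ = a * c) (hadd : b₁ + b₂ = b) :
    ∃ A B C D : R, A * C = a ∧ A * D = b₁ ∧ B * C = b₂ ∧ B * D = c :=
  exists_ABCD_of_split_middle_general a c ha b₁ b₂ hmul
end

section
/- Let R be a unique factorization domain and let a, b, c ∈ R with a ≠ 0 and such that every common divisor of a, b, and c is a unit. If there exist b₁, b₂ ∈ R such that b₁·b₂ = a·c and b₁ + b₂ = b, then there exist A, B, C, D ∈ R with a·x² + b·x + c = (A·x + B)·(C·x + D) in R[x], and moreover A, B, C, D can be chosen so that every common divisor of A and B is a unit and every common divisor of C and D is a unit. -/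
/-!
Split the middle coefficient as `b = b₁ + b₂` with `b₁ * b₂ = a * c`, and write `a = g * p`,
`b₁ = g * q` with `g = gcd a b₁`, so that `p` and `q` are relatively prime. Then `p` divides `b₂`,
say `b₂ = p * t`, and cancelling gives `c = q * t`, whence
`a x² + b x + c = (g x + t) (p x + q)`. The factor `p x + q` is primitive by construction, and
any common divisor of `g` and `t` divides `a`, `b` and `c`, hence is a unit.
-/

open Polynomial

theorem exists_isRelPrime_factors_of_mul_eq_mul {α : Type*} [CommMonoidWithZero α] [GCDMonoid α]
    {a c b₁ b₂ : α} (ha : a ≠ 0) (h : b₁ * b₂ = a * c) :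
    ∃ g t p q : α, a = g * p ∧ b₁ = g * q ∧ b₂ = p * t ∧ c = q * t ∧ IsRelPrime p q := by
  obtain ⟨p, q, hp, hq, hunit⟩ := extract_gcd a b₁
  set g := gcd a b₁
  obtain ⟨hg0, hp0⟩ := mul_ne_zero_iff.1 (hp ▸ ha)
  have hqb₂ : q * b₂ = p * c := mul_left_cancel₀ hg0 <| by
    rw [← mul_assoc, ← mul_assoc, ← hp, ← hq, h]
  have hpq : IsRelPrime p q := gcd_isUnit_iff_isRelPrime.1 hunit
  obtain ⟨t, rfl⟩ := hpq.dvd_of_dvd_mul_left ⟨c, hqb₂⟩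
  have hc : c = q * t := mul_left_cancel₀ hp0 <| by rw [← hqb₂, mul_left_comm]
  exact ⟨g, t, p, q, hp, hq, rfl, hc, hpq⟩

theorem C_mul_X_add_C_mul_C_mul_X_add_C {R : Type*} [CommSemiring R] (g t p q : R) :
    (C g * X + C t) * (C p * X + C q) = C (g * p) * X ^ 2 + C (g * q + p * t) * X + C (q * t) := by
  simp only [map_mul, map_add]
  ring

theorem factors_primitively_of_split_middle
    {R : Type*} [CommRing R] [IsDomain R] [UniqueFactorizationMonoid R]
    (a b c : R) (ha : a ≠ 0)
    (hcop : ∀ d : R, d ∣ a → d ∣ b → d ∣ c → IsUnit d)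
    (h : ∃ b₁ b₂ : R, b₁ * b₂ = a * c ∧ b₁ + b₂ = b) :
    ∃ A B C D : R,
      (Polynomial.C a * Polynomial.X ^ 2 + Polynomial.C b * Polynomial.X + Polynomial.C c
        = (Polynomial.C A * Polynomial.X + Polynomial.C B) *
          (Polynomial.C C * Polynomial.X + Polynomial.C D)) ∧
      (∀ d : R, d ∣ A → d ∣ B → IsUnit d) ∧
      (∀ d : R, d ∣ C → d ∣ D → IsUnit d) := by
  let := UniqueFactorizationMonoid.toGCDMonoid R
  obtain ⟨b₁, b₂, hmul, rfl⟩ := h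
  obtain ⟨g, t, p, q, rfl, rfl, rfl, rfl, hpq⟩ :=
    exists_isRelPrime_factors_of_mul_eq_mul ha hmul
  refine ⟨g, t, p, q, (C_mul_X_add_C_mul_C_mul_X_add_C g t p q).symm, fun d hg ht => ?_, hpq⟩
  exact hcop d (hg.mul_right p) (dvd_add (hg.mul_right q) (ht.mul_left p)) (ht.mul_left q)
end
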